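/- arXiv:1103.1487 — 3 statements merged into one kernel-verified Lean document; each statement's English description precedes it below -/
import Mathlib

section
/- Let A and L be bounded operators on a complex separable Hilbert space H with L - A of trace class. Let λ₁, ..., λ_N be finitely many eigenvalues of L (from its discrete spectrum, counted with algebraic multiplicity, listed via a Schur orthonormal sequence g₁,...,g_N satisfying L g_n ∈ span{g₁,...,g_n} and ⟨L g_n, g_n⟩ = λ_n). Then ∑_{n=1}^N dist(λ_n, Num(A)) ≤ ‖L - A‖_tr, where Num(A) = {⟨Af, f⟩ : ‖f‖ = 1} is the numerical range of A. -/
/-!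
Since `⟪gₙ, A gₙ⟫` lies in the numerical range, `dist(λₙ, Num A) ≤ ‖⟪gₙ, (L - A) gₙ⟫‖`, and the
singular value expansion bounds this by `∑ₖ sₖ ‖⟪eₖ, gₙ⟫‖ ‖⟪gₙ, fₖ⟫‖`. After summing over `n`,
Cauchy–Schwarz and Bessel's inequality for the orthonormal family `g` give each `sₖ` a total
weight of at most `‖eₖ‖ ‖fₖ‖ ≤ 1`.
-/

open scoped InnerProductSpace

theorem Orthonormal.sum_norm_inner_mul_norm_inner_le {𝕜 E ι : Type*} [RCLike 𝕜]
    [NormedAddCommGroup E] [InnerProductSpace 𝕜 E] {g : ι → E} (hg : Orthonormal 𝕜 g)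
    (t : Finset ι) (u v : E) :
    ∑ i ∈ t, ‖⟪u, g i⟫_𝕜‖ * ‖⟪g i, v⟫_𝕜‖ ≤ ‖u‖ * ‖v‖ := by
  calc ∑ i ∈ t, ‖⟪u, g i⟫_𝕜‖ * ‖⟪g i, v⟫_𝕜‖
      ≤ √(∑ i ∈ t, ‖⟪u, g i⟫_𝕜‖ ^ 2) * √(∑ i ∈ t, ‖⟪g i, v⟫_𝕜‖ ^ 2) :=
        Real.sum_mul_le_sqrt_mul_sqrt _ _ _
    _ ≤ √(‖u‖ ^ 2) * √(‖v‖ ^ 2) := by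
        simp_rw [norm_inner_symm u]
        gcongr <;> exact hg.sum_inner_products_le _
    _ = ‖u‖ * ‖v‖ := by rw [Real.sqrt_sq (norm_nonneg u), Real.sqrt_sq (norm_nonneg v)]

def numRange {H : Type*} [NormedAddCommGroup H] [InnerProductSpace ℂ H] (A : H →L[ℂ] H) :
    Set ℂ :=
  {z | ∃ x : H, ‖x‖ = 1 ∧ ⟪x, A x⟫_ℂ = z}

theorem infDist_inner_numRange_le {H : Type*} [NormedAddCommGroup H] [InnerProductSpace ℂ H]
    {x : H} (hx : ‖x‖ = 1) (A L : H →L[ℂ] H) :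
    Metric.infDist ⟪x, L x⟫_ℂ (numRange A) ≤ ‖⟪x, (L - A) x⟫_ℂ‖ := by
  rw [sub_apply, inner_sub_right, ← dist_eq_norm]
  exact Metric.infDist_le_dist_of_mem ⟨x, hx, rfl⟩

theorem norm_inner_le_of_norm_le_one_left {𝕜 E : Type*} [RCLike 𝕜] [NormedAddCommGroup E]
    [InnerProductSpace 𝕜 E] {u : E} (hu : ‖u‖ ≤ 1) (y : E) : ‖⟪u, y⟫_𝕜‖ ≤ ‖y‖ :=
  (norm_inner_le_norm _ _).trans (mul_le_of_le_one_left (norm_nonneg y) hu)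

theorem norm_inner_le_of_norm_le_one_right {𝕜 E : Type*} [RCLike 𝕜] [NormedAddCommGroup E]
    [InnerProductSpace 𝕜 E] {u : E} (hu : ‖u‖ ≤ 1) (x : E) : ‖⟪x, u⟫_𝕜‖ ≤ ‖x‖ :=
  (norm_inner_le_norm _ _).trans (mul_le_of_le_one_right (norm_nonneg x) hu)

section SVDSeries

variable {H : Type*} [NormedAddCommGroup H] [InnerProductSpace ℂ H]
  {s : ℕ → ℝ} {e f : ℕ → H}

variable (hs : ∀ k, 0 ≤ s k) (hsum : Summable s) (he : ∀ k, ‖e k‖ ≤ 1) (hf : ∀ k, ‖f k‖ ≤ 1)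
include hs hsum he hf

theorem summable_mul_norm_inner_mul_norm_inner (x y : H) :
    Summable fun k => s k * (‖⟪e k, y⟫_ℂ‖ * ‖⟪x, f k⟫_ℂ‖) := by
  refine (hsum.mul_right (‖y‖ * ‖x‖)).of_nonneg_of_le (fun k => ?_) fun k => ?_
  · exact mul_nonneg (hs k) (by positivity)
  · gcongr
    exacts [hs k, norm_inner_le_of_norm_le_one_left (he k) y,
      norm_inner_le_of_norm_le_one_right (hf k) x]

theorem summable_svd_series [CompleteSpace H] (y : H) :
    Summable fun k => ((s k : ℂ) * ⟪e k, y⟫_ℂ) • f k := by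
  refine (hsum.mul_right ‖y‖).of_norm_bounded fun k => ?_
  rw [norm_smul, norm_mul, Complex.norm_real, Real.norm_of_nonneg (hs k), mul_assoc]
  gcongr
  exacts [hs k, (mul_le_of_le_one_right (norm_nonneg _) (hf k)).trans
    (norm_inner_le_of_norm_le_one_left (he k) y)]

theorem norm_inner_svd_series_le [CompleteSpace H] (x y : H) :
    ‖⟪x, ∑' k, ((s k : ℂ) * ⟪e k, y⟫_ℂ) • f k⟫_ℂ‖
      ≤ ∑' k, s k * (‖⟪e k, y⟫_ℂ‖ * ‖⟪x, f k⟫_ℂ‖) := by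
  have hterm : ∀ k, ‖⟪x, ((s k : ℂ) * ⟪e k, y⟫_ℂ) • f k⟫_ℂ‖
      = s k * (‖⟪e k, y⟫_ℂ‖ * ‖⟪x, f k⟫_ℂ‖) := fun k => by
    rw [inner_smul_right, norm_mul, norm_mul, Complex.norm_real, Real.norm_of_nonneg (hs k),
      mul_assoc]
  calc ‖⟪x, ∑' k, ((s k : ℂ) * ⟪e k, y⟫_ℂ) • f k⟫_ℂ‖
      = ‖∑' k, ⟪x, ((s k : ℂ) * ⟪e k, y⟫_ℂ) • f k⟫_ℂ‖ := by
        rw [← innerSL_apply_apply, (innerSL ℂ x).map_tsum (summable_svd_series hs hsum he hf y)]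
        rfl
    _ ≤ ∑' k, s k * (‖⟪e k, y⟫_ℂ‖ * ‖⟪x, f k⟫_ℂ‖) := by
        simp_rw [← hterm]
        refine norm_tsum_le_tsum_norm ?_
        simpa only [hterm] using summable_mul_norm_inner_mul_norm_inner hs hsum he hf x y

theorem sum_tsum_mul_norm_inner_mul_norm_inner_le {ι : Type*} [Fintype ι] {g : ι → H}
    (hg : Orthonormal ℂ g) :
    ∑ n, ∑' k, s k * (‖⟪e k, g n⟫_ℂ‖ * ‖⟪g n, f k⟫_ℂ‖) ≤ ∑' k, s k := by
  rw [← Summable.tsum_finsetSum fun n _ =>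
    summable_mul_norm_inner_mul_norm_inner hs hsum he hf (g n) (g n)]
  refine (summable_sum fun n _ =>
    summable_mul_norm_inner_mul_norm_inner hs hsum he hf (g n) (g n)).tsum_le_tsum (fun k => ?_) hsum
  calc ∑ n, s k * (‖⟪e k, g n⟫_ℂ‖ * ‖⟪g n, f k⟫_ℂ‖)
      = s k * ∑ n, ‖⟪e k, g n⟫_ℂ‖ * ‖⟪g n, f k⟫_ℂ‖ := (Finset.mul_sum ..).symm
    _ ≤ s k * (‖e k‖ * ‖f k‖) := by gcongr; exacts [hs k, hg.sum_norm_inner_mul_norm_inner_le _ _ _]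
    _ ≤ s k := mul_le_of_le_one_right (hs k) (mul_le_one₀ (he k) (norm_nonneg _) (hf k))

end SVDSeries

theorem sum_dist_numRange_le_traceNorm_general
    {H : Type*} [NormedAddCommGroup H] [InnerProductSpace ℂ H] [CompleteSpace H]
    (A L : H →L[ℂ] H)
    (s : ℕ → ℝ) (e f : ℕ → H)
    (hs : ∀ n, 0 ≤ s n) (hsum : Summable s)
    (he : Orthonormal ℂ e) (hf : Orthonormal ℂ f)
    (hsvd : ∀ x : H, (L - A) x = ∑' n : ℕ, ((s n : ℂ) * @inner ℂ _ _ (e n) x) • f n)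
    (N : ℕ) (g : Fin N → H) (hg : Orthonormal ℂ g) (lam : Fin N → ℂ)
    (hdiag : ∀ n : Fin N, @inner ℂ _ _ (g n) (L (g n)) = lam n) :
    ∑ n : Fin N,
        Metric.infDist (lam n) {z : ℂ | ∃ x : H, ‖x‖ = 1 ∧ @inner ℂ _ _ x (A x) = z}
      ≤ ∑' n : ℕ, s n := by
  have he1 : ∀ k, ‖e k‖ ≤ 1 := fun k => (he.1 k).le
  have hf1 : ∀ k, ‖f k‖ ≤ 1 := fun k => (hf.1 k).le
  calc ∑ n, Metric.infDist (lam n) (numRange A)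
      ≤ ∑ n, ∑' k, s k * (‖⟪e k, g n⟫_ℂ‖ * ‖⟪g n, f k⟫_ℂ‖) := by
        gcongr with n
        rw [← hdiag n]
        refine (infDist_inner_numRange_le (hg.1 n) A L).trans ?_
        rw [hsvd]
        exact norm_inner_svd_series_le hs hsum he1 hf1 _ _
    _ ≤ ∑' k, s k := sum_tsum_mul_norm_inner_mul_norm_inner_le hs hsum he1 hf1 hg

/-- Let `A, L` be bounded operators on a complex separable Hilbert
space such that `T = L - A` is trace class, given here by a singular value decomposition
`T x = ∑ₙ sₙ ⟨x, eₙ⟩ fₙ` with `{eₙ}, {fₙ}` orthonormal, `sₙ ≥ 0` summable, so that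
`‖L - A‖_tr = ∑ₙ sₙ`. Let `λ₁, …, λ_N` be eigenvalues of `L` listed via a Schur
orthonormal sequence `g₁, …, g_N` with `L gₙ ∈ span{g₁, …, gₙ}` and `⟨L gₙ, gₙ⟩ = λₙ`.
Then `∑ₙ dist(λₙ, Num(A)) ≤ ‖L - A‖_tr`, where `Num(A) = {⟨Ax, x⟩ : ‖x‖ = 1}`
(inner products linear in the first slot: `⟨u, v⟩ = inner v u` in Mathlib). -/
theorem sum_dist_numRange_le_traceNorm
    {H : Type*} [NormedAddCommGroup H] [InnerProductSpace ℂ H] [CompleteSpace H]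
    [TopologicalSpace.SeparableSpace H]
    (A L : H →L[ℂ] H)
    (s : ℕ → ℝ) (e f : ℕ → H)
    (hs : ∀ n, 0 ≤ s n) (hsum : Summable s)
    (he : Orthonormal ℂ e) (hf : Orthonormal ℂ f)
    (hsvd : ∀ x : H, (L - A) x = ∑' n : ℕ, ((s n : ℂ) * @inner ℂ _ _ (e n) x) • f n)
    (N : ℕ) (g : Fin N → H) (hg : Orthonormal ℂ g) (lam : Fin N → ℂ)
    (hschur : ∀ n : Fin N, L (g n) ∈ Submodule.span ℂ (g '' Set.Iic n))
    (hdiag : ∀ n : Fin N, @inner ℂ _ _ (g n) (L (g n)) = lam n) :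
    ∑ n : Fin N,
        Metric.infDist (lam n) {z : ℂ | ∃ x : H, ‖x‖ = 1 ∧ @inner ℂ _ _ x (A x) = z}
      ≤ ∑' n : ℕ, s n :=
  sum_dist_numRange_le_traceNorm_general A L s e f hs hsum he hf hsvd N g hg lam hdiag
end

section
/- Let h be holomorphic on 𝔻 and suppose Bh = Kσ for some finite complex Borel measure σ on 𝕋, where (Bh)(w) = (h(w) - h(0))/w. Define the measure μ(dζ) = ζσ(dζ) + (h(0) - c_σ) m(dζ), where c_σ = ∫_𝕋 ζ dσ(ζ) and m is normalized Lebesgue measure on 𝕋. Then h = Kμ; in particular h is a Cauchy transform. -/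
/-!
On the unit circle `ζ * conj ζ = 1`, so the Cauchy kernel satisfies
`ζ / (1 - w * conj ζ) = ζ + w / (1 - w * conj ζ)`. Integrating against `σ = ρ ν` gives
`K(ζσ)(w) = c_σ + w * (Bh)(w) = c_σ + h w - h 0`, and the normalized Lebesgue measure supplies the
missing constant `h 0 - c_σ` because, by Cauchy's integral formula, the kernel has mean one on the
circle.
-/

open MeasureTheory Metric Real ComplexConjugate

lemma one_sub_norm_le_norm_one_sub_mul_conj (w : ℂ) {ζ : ℂ} (hζ : ‖ζ‖ = 1) :
    1 - ‖w‖ ≤ ‖1 - w * conj ζ‖ := by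
  simpa [hζ] using norm_sub_norm_le (1 : ℂ) (w * conj ζ)

lemma one_sub_mul_conj_ne_zero {w ζ : ℂ} (hw : ‖w‖ < 1) (hζ : ‖ζ‖ = 1) :
    1 - w * conj ζ ≠ 0 :=
  norm_pos_iff.mp ((sub_pos.mpr hw).trans_le (one_sub_norm_le_norm_one_sub_mul_conj w hζ))

lemma norm_inv_one_sub_mul_conj_le {w ζ : ℂ} (hw : ‖w‖ < 1) (hζ : ‖ζ‖ = 1) :
    ‖(1 - w * conj ζ)⁻¹‖ ≤ (1 - ‖w‖)⁻¹ := by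
  rw [norm_inv]
  exact inv_anti₀ (sub_pos.mpr hw) (one_sub_norm_le_norm_one_sub_mul_conj w hζ)

lemma mul_conj_eq_one_of_norm_eq_one {ζ : ℂ} (hζ : ‖ζ‖ = 1) : ζ * conj ζ = 1 := by
  simp [Complex.mul_conj', hζ]

lemma inv_one_sub_mul_conj_mul_self {w ζ : ℂ} (hw : ‖w‖ < 1) (hζ : ‖ζ‖ = 1) :
    (1 - w * conj ζ)⁻¹ * ζ = ζ + w * (1 - w * conj ζ)⁻¹ := by
  have hne := one_sub_mul_conj_ne_zero hw hζ
  field_simp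
  linear_combination w * mul_conj_eq_one_of_norm_eq_one hζ

lemma integral_inv_one_sub_mul_conj_mul_self_mul {ν : Measure ℂ} (hcirc : ∀ᵐ ζ ∂ν, ‖ζ‖ = 1)
    {ρ : ℂ → ℂ} (hρ : Integrable ρ ν) {w : ℂ} (hw : ‖w‖ < 1) :
    ∫ ζ, (1 - w * conj ζ)⁻¹ * (ζ * ρ ζ) ∂ν
      = ∫ ζ, ζ * ρ ζ ∂ν + w * ∫ ζ, (1 - w * conj ζ)⁻¹ * ρ ζ ∂ν := by
  have hkernel_meas : AEStronglyMeasurable (fun ζ : ℂ ↦ (1 - w * conj ζ)⁻¹) ν := by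
    fun_prop
  have hself : Integrable (fun ζ ↦ ζ * ρ ζ) ν :=
    hρ.bdd_mul (c := 1) aestronglyMeasurable_id (hcirc.mono fun _ h ↦ h.le)
  have hkernel : Integrable (fun ζ ↦ (1 - w * conj ζ)⁻¹ * ρ ζ) ν :=
    hρ.bdd_mul hkernel_meas (hcirc.mono fun _ ↦ norm_inv_one_sub_mul_conj_le hw)
  calc ∫ ζ, (1 - w * conj ζ)⁻¹ * (ζ * ρ ζ) ∂ν
      = ∫ ζ, ζ * ρ ζ + w * ((1 - w * conj ζ)⁻¹ * ρ ζ) ∂ν := by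
        refine integral_congr_ae (hcirc.mono fun ζ hζ ↦ ?_)
        linear_combination ρ ζ * inv_one_sub_mul_conj_mul_self hw hζ
    _ = ∫ ζ, ζ * ρ ζ ∂ν + w * ∫ ζ, (1 - w * conj ζ)⁻¹ * ρ ζ ∂ν := by
        rw [integral_add hself (hkernel.const_mul w), integral_const_mul]

lemma integral_inv_one_sub_mul_conj_exp {w : ℂ} (hw : ‖w‖ < 1) :
    ∫ θ in (0:ℝ)..2 * π, (1 - w * conj (Complex.exp (θ * Complex.I)))⁻¹ = 2 * π := by
  have hcauchy : (∮ z in C(0, 1), (z - w)⁻¹) = 2 * π * Complex.I :=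
    circleIntegral.integral_sub_inv_of_mem_ball (by simpa using hw)
  have hintegrand : ∀ θ : ℝ, deriv (circleMap 0 1) θ • (circleMap 0 1 θ - w)⁻¹
      = Complex.I * (1 - w * conj (Complex.exp (θ * Complex.I)))⁻¹ := by
    intro θ
    set e := Complex.exp (θ * Complex.I)
    have he : ‖e‖ = 1 := by simp [e, Complex.norm_exp]
    have hne := one_sub_mul_conj_ne_zero hw he
    have hew : e - w ≠ 0 := fun h ↦ by simp_all [sub_eq_zero]
    have hcircle : circleMap 0 1 θ = e := by simp [circleMap, e]
    rw [deriv_circleMap, hcircle, smul_eq_mul]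
    clear_value e
    field_simp
    linear_combination -w * mul_conj_eq_one_of_norm_eq_one he
  rw [circleIntegral, funext hintegrand, intervalIntegral.integral_const_mul,
    mul_comm (2 * (π : ℂ))] at hcauchy
  exact mul_left_cancel₀ Complex.I_ne_zero hcauchy

theorem cauchyTransform_of_backwardShift_general
    (h : ℂ → ℂ)
    (ν : Measure ℂ) (hcirc : ∀ᵐ ζ ∂ν, ‖ζ‖ = 1)
    (ρ : ℂ → ℂ) (hρ : Integrable ρ ν)
    (hB : ∀ w ∈ ball (0:ℂ) 1, w ≠ 0 →
      (h w - h 0) / w = ∫ ζ, (1 - w * (starRingEnd ℂ) ζ)⁻¹ * ρ ζ ∂ν) :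
    ∀ w ∈ ball (0:ℂ) 1,
      h w = (∫ ζ, (1 - w * (starRingEnd ℂ) ζ)⁻¹ * (ζ * ρ ζ) ∂ν)
        + (h 0 - ∫ ζ, ζ * ρ ζ ∂ν) *
          ((1 / (2 * π)) *
            ∫ θ in (0:ℝ)..(2 * π),
              (1 - w * (starRingEnd ℂ) (Complex.exp (θ * Complex.I)))⁻¹) := by
  intro w hw
  have hw_norm : ‖w‖ < 1 := mem_ball_zero_iff.mp hw
  rw [integral_inv_one_sub_mul_conj_exp hw_norm,
    integral_inv_one_sub_mul_conj_mul_self_mul hcirc hρ hw_norm]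
  rcases eq_or_ne w 0 with rfl | hw0
  · field_simp
    ring
  · rw [← hB w hw hw0]
    field_simp
    ring

/-- Let `h` be holomorphic on the unit disk with `Bh = Kσ` for a
finite complex Borel measure `σ` on the circle (polar form `dσ = ρ dν`). With
`c_σ = ∫ ζ dσ(ζ)` and `m` the normalized Lebesgue measure on the circle (parametrized
by `θ ↦ exp(iθ)`), the measure `μ(dζ) = ζ σ(dζ) + (h(0) - c_σ) m(dζ)` satisfies
`h = Kμ`; in particular `h` is a Cauchy transform. -/
theorem cauchyTransform_of_backwardShift
    (h : ℂ → ℂ) (hh : DifferentiableOn ℂ h (ball (0:ℂ) 1))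
    (ν : Measure ℂ) [IsFiniteMeasure ν] (hcirc : ∀ᵐ ζ ∂ν, ‖ζ‖ = 1)
    (ρ : ℂ → ℂ) (hρ : Integrable ρ ν)
    (hB : ∀ w ∈ ball (0:ℂ) 1, w ≠ 0 →
      (h w - h 0) / w = ∫ ζ, (1 - w * (starRingEnd ℂ) ζ)⁻¹ * ρ ζ ∂ν) :
    ∀ w ∈ ball (0:ℂ) 1,
      h w = (∫ ζ, (1 - w * (starRingEnd ℂ) ζ)⁻¹ * (ζ * ρ ζ) ∂ν)
        + (h 0 - ∫ ζ, ζ * ρ ζ ∂ν) *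
          ((1 / (2 * π)) *
            ∫ θ in (0:ℝ)..(2 * π),
              (1 - w * (starRingEnd ℂ) (Complex.exp (θ * Complex.I)))⁻¹) :=
  cauchyTransform_of_backwardShift_general h ν hcirc ρ hρ hB
end

section
/- Let h(w) = 1 + w/(1+w) for w ∈ 𝔻. Then h has exactly one zero z = -1/2 in 𝔻, and ∑_{z ∈ Z(h)}(|z|^{-1} - 1) = 1 = ‖δ_{-1}‖, where Bh = K δ_{-1} is the Cauchy transform of the Dirac measure at -1 on the unit circle. Hence the bound ∑_{z ∈ Z(h)}(|z|^{-1} - 1) ≤ ‖Bh‖_𝒦 is attained with equality. -/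
open Metric

/-! Writing `h(w) = 1 + w/(1+w) = (1+2w)/(1+w)` shows that `-1/2` is its only zero, and
there `h' = (1+w)⁻² = 4`. The backward shift `(h(w) - h(0))/w = 1/(1+w)` is the Cauchy
kernel `1/(1 - w ζ̄)` at `ζ = -1`, i.e. the Cauchy transform of `δ₋₁`. -/

section Field

variable {K : Type*} [Field K]

theorem one_add_div_one_add_eq_zero_iff [CharZero K] (w : K) :
    1 + w / (1 + w) = 0 ↔ w = -(1 / 2) := by
  rcases eq_or_ne (1 + w) 0 with hw | hw
  · -- junk value `w / 0 = 0`: the expression equals `1` at `w = -1`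
    obtain rfl : w = -1 := by linear_combination hw
    norm_num
  · rw [one_add_div hw, div_eq_zero_iff, or_iff_left hw]
    exact ⟨fun h => by linear_combination h / 2, fun h => by linear_combination 2 * h⟩

theorem one_add_div_one_add_sub_div_self {w : K} (hw : w ≠ 0) :
    ((1 + w / (1 + w)) - (1 + 0 / (1 + 0))) / w = (1 + w)⁻¹ := by
  rw [zero_div, add_zero, add_sub_cancel_left, div_div_cancel_left' hw]

end Field

theorem hasDerivAt_one_add_div_one_add {𝕜 : Type*} [NontriviallyNormedField 𝕜] {w : 𝕜}
    (hw : 1 + w ≠ 0) : HasDerivAt (fun w : 𝕜 => 1 + w / (1 + w)) ((1 + w) ^ 2)⁻¹ w := by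
  have hquot := (hasDerivAt_id' w).div ((hasDerivAt_id' w).const_add 1) hw
  exact (hquot.const_add 1).congr_deriv (by ring)

/-- For `h(w) = 1 + w/(1+w)` on the unit disk: `h` has exactly one
zero in `𝔻`, namely `z = -1/2`, which is simple; `∑_{z ∈ Z(h)}(|z|⁻¹ - 1) = 1`; and
`Bh(w) = (h(w) - h(0))/w = 1/(1 + w)` is the Cauchy transform of the Dirac measure
`δ₋₁` (total variation `1`), so the Blaschke-type bound is attained with equality. -/
theorem example_equality_case :
    (∀ w ∈ ball (0:ℂ) 1, (1 + w / (1 + w) = 0 ↔ w = -(1/2))) ∧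
    deriv (fun w : ℂ => 1 + w / (1 + w)) (-(1/2)) ≠ 0 ∧
    ‖(-(1/2) : ℂ)‖⁻¹ - 1 = 1 ∧
    (∀ w ∈ ball (0:ℂ) 1, w ≠ 0 →
      ((1 + w / (1 + w)) - (1 + (0:ℂ) / (1 + 0))) / w
        = (1 - w * (starRingEnd ℂ) (-1))⁻¹) := by
  refine ⟨fun w _ => one_add_div_one_add_eq_zero_iff w, ?_, by norm_num, fun w _ hw => ?_⟩
  · rw [(hasDerivAt_one_add_div_one_add (by norm_num)).deriv]
    norm_num
  · rw [one_add_div_one_add_sub_div_self hw, map_neg, map_one, mul_neg_one, sub_neg_eq_add]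
end
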